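/- arXiv:2307.07040 — 3 statements merged into one kernel-verified Lean document; each statement's English description precedes it below -/
import Mathlib

section
/- Let θ : ℝ^d → ℝ^n be continuous and satisfy the Anosov condition: the Lebesgue measure of ⋃_{k ∈ ℤ^n\{0}} {I ∈ ℝ^d : k·θ(I) = 0} equals zero. Let P : ℝ^d × 𝕋^n → ℝ^d be continuous and set ⟨P⟩(I) = ∫_{𝕋^n} P(I,φ) dφ. For N > 0, δ > 0 and R > 0 define A^δ_{N,R} = { I ∈ ℝ^d : ‖I‖ < R and max_{φ∈𝕋^n} | (1/N) ∫₀^N P(I, φ + tθ(I)) dt − ⟨P⟩(I) | > δ }. Then for every fixed δ > 0 and R > 0 the Lebesgue measure of A^δ_{N,R} tends to 0 as N → ∞. -/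
open MeasureTheory Real Filter

noncomputable section

instance : Fact (0 < 2 * π) := ⟨by positivity⟩

/-- The `n`-dimensional torus `ℝⁿ/(2πℤⁿ)`. -/
abbrev Torus (n : ℕ) := Fin n → AddCircle (2 * π)

/-- The normalized Haar probability measure on the torus. -/
noncomputable def haarT (n : ℕ) : Measure (Torus n) :=
  (ENNReal.ofReal ((2 * π) ^ n))⁻¹ • volume

/-! For a nonresonant frequency vector `ω` the linear flow `φ ↦ φ + tω` on the torus is uniquely
ergodic, uniformly in the starting point: for a character `χ_k` the time average over `[0, N]` is
`χ_k(φ) (e^{i(k·ω)N} - 1) / (i(k·ω)N) = O(1/N)`; averaging is `1`-Lipschitz for the sup norm, so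
uniform convergence passes to the closure of the span of the characters, which is all of
`C(𝕋ⁿ, ℂ)` by Stone–Weierstrass, and then to finite-dimensional values coordinatewise.
The Anosov condition says that `θ(I)` is nonresonant for almost every `I`, so almost every `I`
eventually leaves `A^δ_{N,R}`, and dominated convergence on the ball of radius `R` concludes. -/

open Set Topology

lemma fourier_homeomorphAddCircle {p q : ℝ} (hp : p ≠ 0) (hq : q ≠ 0) (m : ℤ) (x : AddCircle p) :
    fourier m (AddCircle.homeomorphAddCircle p q hp hq x) = fourier m x := by
  induction x using QuotientAddGroup.induction_on with
  | H x =>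
    rw [AddCircle.homeomorphAddCircle_apply_mk, fourier_coe_apply, fourier_coe_apply]
    congr 1
    push_cast
    have : (q : ℂ) ≠ 0 := Complex.ofReal_ne_zero.2 hq
    field_simp

lemma fourier_apply_add {T : ℝ} (m : ℤ) (x y : AddCircle T) :
    fourier m (x + y) = fourier m x * fourier m y := by
  simp only [fourier_apply, smul_add, AddCircle.toCircle_add, Circle.coe_mul]

lemma integral_fourier_of_ne_zero {T : ℝ} [hT : Fact (0 < T)] {m : ℤ} (hm : m ≠ 0) :
    ∫ x : AddCircle T, fourier m x = 0 :=
  integral_eq_zero_of_add_right_eq_neg (fourier_add_half_inv_index hm hT.out)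

lemma norm_intervalIntegral_exp_mul_I_le {a : ℝ} (ha : a ≠ 0) (N : ℝ) :
    ‖∫ t in (0 : ℝ)..N, Complex.exp (a * Complex.I * t)‖ ≤ 2 / |a| := by
  have hc : (a : ℂ) * Complex.I ≠ 0 := mul_ne_zero (Complex.ofReal_ne_zero.2 ha) Complex.I_ne_zero
  rw [integral_exp_mul_complex hc, norm_div, norm_mul, Complex.norm_I, mul_one, Complex.norm_real,
    Real.norm_eq_abs]
  gcongr
  calc _ ≤ ‖Complex.exp (a * Complex.I * N)‖ + ‖Complex.exp (a * Complex.I * (0 : ℝ))‖ :=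
        norm_sub_le _ _
    _ = 2 := by norm_num [Complex.norm_exp]

namespace Torus

variable {n : ℕ}

lemma volume_univ :
    (volume : Measure (Torus n)) univ = ENNReal.ofReal ((2 * π) ^ n) := by
  rw [volume_pi, Measure.pi_univ]
  simp [AddCircle.measure_univ, ENNReal.ofReal_pow two_pi_pos.le]

instance : IsProbabilityMeasure (haarT n) :=
  ⟨by rw [haarT, Measure.smul_apply, volume_univ, smul_eq_mul,
    ENNReal.inv_mul_cancel (by positivity) ENNReal.ofReal_ne_top]⟩

def character (k : Fin n → ℤ) : C(Torus n, ℂ) where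
  toFun φ := ∏ i, fourier (k i) (φ i)

lemma norm_character (k : Fin n → ℤ) (φ : Torus n) : ‖character k φ‖ = 1 := by
  simp [character, norm_prod, Circle.norm_coe]

lemma character_zero : character (0 : Fin n → ℤ) = 1 := by
  ext φ
  simp [character]

lemma integral_character {k : Fin n → ℤ} (hk : k ≠ 0) : ∫ φ, character k φ ∂haarT n = 0 := by
  obtain ⟨i, hi⟩ : ∃ i, k i ≠ 0 := Function.ne_iff.mp hk
  rw [haarT, integral_smul_measure, volume_pi, character, ContinuousMap.coe_mk,
    integral_fintype_prod_eq_prod (f := fun i x => fourier (k i) x),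
    Finset.prod_eq_zero (Finset.mem_univ i) (integral_fourier_of_ne_zero hi), smul_zero]

def toUnitAddTorus (n : ℕ) : Torus n ≃ₜ UnitAddTorus (Fin n) :=
  Homeomorph.piCongrRight fun _ => AddCircle.homeomorphAddCircle _ _ two_pi_pos.ne' one_ne_zero

lemma character_eq_mFourier_comp (k : Fin n → ℤ) :
    character k = (UnitAddTorus.mFourier k).comp (toUnitAddTorus n : C(_, _)) := by
  ext φ
  simp only [character, UnitAddTorus.mFourier, ContinuousMap.coe_mk, ContinuousMap.comp_apply,
    toUnitAddTorus, Homeomorph.piCongrRight_apply, fourier_homeomorphAddCircle]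

lemma span_character_closure_eq_top :
    (Submodule.span ℂ (range (character (n := n)))).topologicalClosure = ⊤ := by
  let precomp : C(UnitAddTorus (Fin n), ℂ) →L[ℂ] C(Torus n, ℂ) :=
    ⟨(ContinuousMap.compRightAlgHom ℂ ℂ (toUnitAddTorus n : C(_, _))).toLinearMap,
      ContinuousMap.compRightAlgHom_continuous _ _ _⟩
  have hdense : DenseRange precomp := by
    refine Function.Surjective.denseRange fun f => ⟨f.comp ((toUnitAddTorus n).symm : C(_, _)), ?_⟩
    ext φ
    show f ((toUnitAddTorus n).symm (toUnitAddTorus n φ)) = f φ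
    rw [Homeomorph.symm_apply_apply]
  have := hdense.topologicalClosure_map_submodule UnitAddTorus.span_mFourier_closure_eq_top
  rw [Submodule.map_span, ← range_comp] at this
  convert this using 4
  ext k : 1
  exact character_eq_mFourier_comp k

def flow (ω : Fin n → ℝ) (t : ℝ) (φ : Torus n) : Torus n :=
  fun i => φ i + ((t * ω i : ℝ) : AddCircle (2 * π))

@[fun_prop]
lemma continuous_flow {X : Type*} [TopologicalSpace X] {ω : X → Fin n → ℝ} {t : X → ℝ}
    {φ : X → Torus n} (hω : Continuous ω) (ht : Continuous t) (hφ : Continuous φ) :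
    Continuous fun x => flow (ω x) (t x) (φ x) := by
  have := AddCircle.continuous_mk' (2 * π)
  unfold flow
  fun_prop

lemma character_flow (k : Fin n → ℤ) (ω : Fin n → ℝ) (t : ℝ) (φ : Torus n) :
    character k (flow ω t φ) =
      character k φ * Complex.exp (((∑ i, k i * ω i : ℝ) * Complex.I) * t) := by
  simp only [character, ContinuousMap.coe_mk, flow, fourier_apply_add, Finset.prod_mul_distrib,
    fourier_coe_apply, ← Complex.exp_sum]
  congr 2
  push_cast
  rw [Finset.sum_mul, Finset.sum_mul]
  refine Finset.sum_congr rfl fun i _ => ?_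
  field_simp

section TimeAverage

variable {E F : Type*} [NormedAddCommGroup E] [NormedAddCommGroup F]
  {ω : Fin n → ℝ} {f g : Torus n → E} {N : ℝ} {φ : Torus n}

lemma intervalIntegrable_comp_flow (hf : Continuous f) (ω : Fin n → ℝ) (φ : Torus n) (a b : ℝ) :
    IntervalIntegrable (fun t => f (flow ω t φ)) volume a b :=
  (hf.comp (by fun_prop : Continuous fun t => flow ω t φ)).intervalIntegrable a b

lemma integrable_haarT (hf : Continuous f) : Integrable f (haarT n) :=
  hf.integrable_of_hasCompactSupport (HasCompactSupport.of_compactSpace f)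

variable [NormedSpace ℝ E] [NormedSpace ℝ F]

def timeAverage (ω : Fin n → ℝ) (f : Torus n → E) (N : ℝ) (φ : Torus n) : E :=
  (1 / N) • ∫ t in (0 : ℝ)..N, f (flow ω t φ)

lemma timeAverage_add (hf : Continuous f) (hg : Continuous g) :
    timeAverage ω (f + g) N φ = timeAverage ω f N φ + timeAverage ω g N φ := by
  simp only [timeAverage, Pi.add_apply, ← smul_add]
  rw [intervalIntegral.integral_add (intervalIntegrable_comp_flow hf ω φ 0 N)
    (intervalIntegrable_comp_flow hg ω φ 0 N)]

lemma timeAverage_sub (hf : Continuous f) (hg : Continuous g) :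
    timeAverage ω (f - g) N φ = timeAverage ω f N φ - timeAverage ω g N φ := by
  simp only [timeAverage, Pi.sub_apply, ← smul_sub]
  rw [intervalIntegral.integral_sub (intervalIntegrable_comp_flow hf ω φ 0 N)
    (intervalIntegrable_comp_flow hg ω φ 0 N)]

lemma timeAverage_smul {𝕜 : Type*} [NormedField 𝕜] [NormedSpace 𝕜 E] [SMulCommClass ℝ 𝕜 E]
    (c : 𝕜) (f : Torus n → E) : timeAverage ω (c • f) N φ = c • timeAverage ω f N φ := by
  simp only [timeAverage, Pi.smul_apply, intervalIntegral.integral_smul]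
  exact smul_comm _ _ _

lemma timeAverage_comp [CompleteSpace E] [CompleteSpace F] (L : E →L[ℝ] F) (hf : Continuous f) :
    timeAverage ω (L ∘ f) N φ = L (timeAverage ω f N φ) := by
  simp only [timeAverage, Function.comp_apply, map_smul,
    L.intervalIntegral_comp_comm (intervalIntegrable_comp_flow hf ω φ 0 N)]

lemma norm_timeAverage_le {C : ℝ} (hC : ∀ x, ‖f x‖ ≤ C) : ‖timeAverage ω f N φ‖ ≤ C := by
  have hC₀ : 0 ≤ C := (norm_nonneg _).trans (hC 0)
  have hint : ‖∫ t in (0 : ℝ)..N, f (flow ω t φ)‖ ≤ C * |N| := by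
    simpa using intervalIntegral.norm_integral_le_of_norm_le_const (a := 0) (b := N)
      fun t _ => hC (flow ω t φ)
  rcases eq_or_ne N 0 with rfl | hN
  · simpa [timeAverage] using hC₀
  calc ‖timeAverage ω f N φ‖ ≤ |1 / N| * (C * |N|) := by
        rw [timeAverage, norm_smul, Real.norm_eq_abs]; gcongr
    _ = C := by rw [abs_div, abs_one]; field_simp [abs_ne_zero.2 hN]

lemma dist_timeAverage_le (f g : C(Torus n, E)) :
    dist (timeAverage ω f N φ) (timeAverage ω g N φ) ≤ dist f g := by
  rw [dist_eq_norm, ← timeAverage_sub f.continuous g.continuous, dist_eq_norm]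
  exact norm_timeAverage_le fun x => (f - g).norm_coe_le_norm x

lemma dist_integral_haarT_le (f g : C(Torus n, E)) :
    dist (∫ ψ, f ψ ∂haarT n) (∫ ψ, g ψ ∂haarT n) ≤ dist f g := by
  rw [dist_eq_norm, ← integral_sub (integrable_haarT f.continuous) (integrable_haarT g.continuous),
    dist_eq_norm]
  simpa using norm_integral_le_of_norm_le_const (μ := haarT n)
    (.of_forall fun x => (f - g).norm_coe_le_norm x)

lemma isClosed_setOf_tendstoUniformly_timeAverage (ω : Fin n → ℝ) :
    IsClosed {f : C(Torus n, E) |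
      TendstoUniformly (timeAverage ω f) (fun _ => ∫ ψ, f ψ ∂haarT n) atTop} := by
  have hequi : Equicontinuous fun N (f : C(Torus n, E)) => UniformFun.ofFun (timeAverage ω f N) :=
    (LipschitzWith.uniformEquicontinuous _ 1 fun N => UniformFun.lipschitzWith_ofFun_iff.2
      fun φ => .of_dist_le_mul fun f g => by simpa using dist_timeAverage_le f g).equicontinuous
  have hlim : Continuous fun f : C(Torus n, E) =>
      UniformFun.ofFun fun _ : Torus n => ∫ ψ, f ψ ∂haarT n :=
    (UniformFun.lipschitzWith_ofFun_iff (K := 1).2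
      fun _ => .of_dist_le_mul fun f g => by simpa using dist_integral_haarT_le f g).continuous
  simpa only [UniformFun.tendsto_iff_tendstoUniformly, Function.comp_def, UniformFun.toFun_ofFun]
    using hequi.isClosed_setOfPred_tendsto hlim

lemma tendstoUniformly_timeAverage_comp [CompleteSpace E] [CompleteSpace F] (L : E →L[ℝ] F)
    (hf : Continuous f)
    (h : TendstoUniformly (timeAverage ω f) (fun _ => ∫ ψ, f ψ ∂haarT n) atTop) :
    TendstoUniformly (timeAverage ω (L ∘ f)) (fun _ => ∫ ψ, L (f ψ) ∂haarT n) atTop := by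
  convert L.uniformContinuous.comp_tendstoUniformly h using 1
  · ext N φ
    exact timeAverage_comp L hf
  · ext φ
    exact L.integral_comp_comm (integrable_haarT hf)

variable (𝕜 : Type*) [NormedField 𝕜] [NormedSpace 𝕜 E] [SMulCommClass ℝ 𝕜 E]

def uniformErgodicSubmodule (ω : Fin n → ℝ) : Submodule 𝕜 C(Torus n, E) where
  carrier := {f | TendstoUniformly (timeAverage ω f) (fun _ => ∫ ψ, f ψ ∂haarT n) atTop}
  add_mem' {f g} hf hg := by
    rw [Set.mem_ofPred_eq]
    convert hf.add hg using 1
    · ext N φ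
      exact timeAverage_add f.continuous g.continuous
    · ext φ
      exact integral_add (integrable_haarT f.continuous) (integrable_haarT g.continuous)
  zero_mem' := Metric.tendstoUniformly_iff.2 fun ε hε => .of_forall fun N φ => by
    simpa [timeAverage] using hε
  smul_mem' c f hf := by
    rw [Set.mem_ofPred_eq]
    convert (uniformContinuous_const_smul c).comp_tendstoUniformly hf using 1
    · ext N φ
      exact timeAverage_smul c f
    · ext φ
      exact integral_smul c f

lemma isClosed_uniformErgodicSubmodule (ω : Fin n → ℝ) :
    IsClosed (uniformErgodicSubmodule (E := E) 𝕜 ω : Set C(Torus n, E)) :=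
  isClosed_setOf_tendstoUniformly_timeAverage ω

end TimeAverage

def Nonresonant (ω : Fin n → ℝ) : Prop :=
  ∀ k : Fin n → ℤ, k ≠ 0 → ∑ i, (k i : ℝ) * ω i ≠ 0

lemma character_mem_uniformErgodicSubmodule {ω : Fin n → ℝ} (hω : Nonresonant ω)
    (k : Fin n → ℤ) : character k ∈ uniformErgodicSubmodule ℂ ω := by
  rcases eq_or_ne k 0 with rfl | hk
  · refine Metric.tendstoUniformly_iff.2 fun ε hε => ?_
    filter_upwards [eventually_ne_atTop 0] with N hN φ
    simpa [timeAverage, character_zero, hN] using hε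
  set a := ∑ i, (k i : ℝ) * ω i
  have ha : a ≠ 0 := hω k hk
  have hbound : ∀ N φ, ‖timeAverage ω (character k) N φ‖ ≤ |1 / N| * (2 / |a|) := by
    intro N φ
    simp only [timeAverage, character_flow, intervalIntegral.integral_const_mul, norm_smul,
      norm_mul, norm_character, one_mul, Real.norm_eq_abs]
    gcongr
    exact norm_intervalIntegral_exp_mul_I_le ha N
  have hlim : Tendsto (fun N : ℝ => |1 / N| * (2 / |a|)) atTop (𝓝 0) := by
    simpa using (tendsto_inv_atTop_zero (𝕜 := ℝ)).abs.mul_const (2 / |a|)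
  refine Metric.tendstoUniformly_iff.2 fun ε hε => ?_
  filter_upwards [hlim.eventually (gt_mem_nhds hε)] with N hN φ
  rw [integral_character hk, dist_zero_left]
  exact (hbound N φ).trans_lt hN

lemma mem_uniformErgodicSubmodule_of_nonresonant {ω : Fin n → ℝ} (hω : Nonresonant ω)
    (f : C(Torus n, ℂ)) : f ∈ uniformErgodicSubmodule ℂ ω := by
  have h := (Submodule.span ℂ (range character)).topologicalClosure_minimal
    (Submodule.span_le.2 (range_subset_iff.2 (character_mem_uniformErgodicSubmodule hω)))
    (isClosed_uniformErgodicSubmodule ℂ ω)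
  rw [span_character_closure_eq_top] at h
  exact h trivial

theorem tendstoUniformly_timeAverage {E : Type*} [NormedAddCommGroup E] [NormedSpace ℝ E]
    [FiniteDimensional ℝ E] {ω : Fin n → ℝ} (hω : Nonresonant ω) {f : Torus n → E}
    (hf : Continuous f) :
    TendstoUniformly (timeAverage ω f) (fun _ => ∫ ψ, f ψ ∂haarT n) atTop := by
  let b := Module.finBasis ℝ E
  let coeff (i : Fin _) : C(Torus n, ℂ) :=
    (Complex.ofRealCLM.comp (LinearMap.toContinuousLinearMap (b.coord i)) : C(E, ℂ)).comp ⟨f, hf⟩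
  let L (i : Fin _) : ℂ →L[ℝ] E := Complex.reCLM.smulRight (b i)
  have hL (i : Fin _) : (L i : C(ℂ, E)).comp (coeff i) ∈ uniformErgodicSubmodule ℝ ω :=
    tendstoUniformly_timeAverage_comp (L i) (coeff i).continuous
      (mem_uniformErgodicSubmodule_of_nonresonant hω (coeff i))
  have hf_eq : (⟨f, hf⟩ : C(Torus n, E)) = ∑ i, (L i : C(ℂ, E)).comp (coeff i) := by
    ext φ
    simp [L, coeff, b.sum_repr]
  have := (uniformErgodicSubmodule ℝ ω).sum_mem (t := Finset.univ) fun i _ => hL i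
  rw [← hf_eq] at this
  exact this

section Continuity

variable {X E : Type*} [TopologicalSpace X] [NormedAddCommGroup E] [NormedSpace ℝ E]

lemma continuous_timeAverage {ω : X → Fin n → ℝ} (hω : Continuous ω) {F : X → Torus n → E}
    (hF : Continuous fun p : X × Torus n => F p.1 p.2) (N : ℝ) :
    Continuous fun p : X × Torus n => timeAverage (ω p.1) (F p.1) N p.2 := by
  have hint : Continuous fun q : (X × Torus n) × ℝ => F q.1.1 (flow (ω q.1.1) q.2 q.1.2) :=
    hF.comp (f := fun q : (X × Torus n) × ℝ => (q.1.1, flow (ω q.1.1) q.2 q.1.2)) (by fun_prop)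
  exact (intervalIntegral.continuous_parametric_intervalIntegral_of_continuous' hint 0 N).const_smul _

lemma continuous_integral_haarT [FirstCountableTopology X] [LocallyCompactSpace X]
    {F : X → Torus n → E} (hF : Continuous fun p : X × Torus n => F p.1 p.2) :
    Continuous fun x => ∫ ψ, F x ψ ∂haarT n := by
  simpa using continuous_parametric_integral_of_continuous (μ := haarT n) hF isCompact_univ

end Continuity

end Torus

lemma isOpen_setOf_exists_lt {X Y : Type*} [TopologicalSpace X] [TopologicalSpace Y]
    {g : X → Y → ℝ} (hg : Continuous fun p : X × Y => g p.1 p.2) (δ : ℝ) :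
    IsOpen {x | ∃ y, δ < g x y} := by
  convert isOpenMap_fst _ (isOpen_lt (continuous_const (y := δ)) hg)
  ext x
  simp

lemma tendsto_measure_zero_of_ae_eventually_notMem {α ι : Type*} [MeasurableSpace α]
    {μ : Measure α} {L : Filter ι} [L.IsCountablyGenerated] {A : ι → Set α} {B : Set α}
    (hA : ∀ i, MeasurableSet (A i)) (hB : MeasurableSet B) (hμB : μ B ≠ ⊤) (hAB : ∀ i, A i ⊆ B)
    (h : ∀ᵐ x ∂μ, ∀ᶠ i in L, x ∉ A i) :
    Tendsto (fun i => μ (A i)) L (𝓝 0) := by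
  simpa using tendsto_measure_of_ae_tendsto_indicator L MeasurableSet.empty hA hB hμB
    (.of_forall hAB) (by simpa using h)

open Torus in
theorem measure_nonergodic_set_tendsto_zero_general
    (d n : ℕ) (θ : EuclideanSpace ℝ (Fin d) → Fin n → ℝ) (hθ : Continuous θ)
    (hAnosov : volume (⋃ k ∈ {k : Fin n → ℤ | k ≠ 0},
        {I : EuclideanSpace ℝ (Fin d) | ∑ i, (k i : ℝ) * θ I i = 0}) = 0)
    (P : EuclideanSpace ℝ (Fin d) → Torus n → EuclideanSpace ℝ (Fin d))
    (hP : Continuous fun p : EuclideanSpace ℝ (Fin d) × Torus n => P p.1 p.2)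
    (δ R : ℝ) (hδ : 0 < δ) :
    Tendsto
      (fun N : ℝ => volume
        {I : EuclideanSpace ℝ (Fin d) | ‖I‖ < R ∧ ∃ φ : Torus n,
          δ < ‖(1 / N) • (∫ t in (0:ℝ)..N,
                  P I (fun i => φ i + ((t * θ I i : ℝ) : AddCircle (2 * π))))
                - ∫ ψ, P I ψ ∂(haarT n)‖})
      atTop (nhds 0) := by
  have hres : ∀ᵐ I : EuclideanSpace ℝ (Fin d), Nonresonant (θ I) := by
    filter_upwards [measure_eq_zero_iff_ae_notMem.1 hAnosov] with I hI k hk hzero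
    exact hI (mem_biUnion hk hzero)
  refine tendsto_measure_zero_of_ae_eventually_notMem (fun N => ?_) measurableSet_ball
    measure_ball_lt_top.ne (fun N I hI => mem_ball_zero_iff.2 hI.1) ?_
  · have hgap := ((continuous_timeAverage hθ hP N).sub
      ((continuous_integral_haarT hP).comp continuous_fst)).norm
    exact ((isOpen_lt continuous_norm continuous_const).inter
      (isOpen_setOf_exists_lt hgap δ)).measurableSet
  · filter_upwards [hres] with I hI
    have hunif := tendstoUniformly_timeAverage hI (hP.comp (Continuous.prodMk_right I))
    filter_upwards [Metric.tendstoUniformly_iff.1 hunif δ hδ] with N hN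
    rintro ⟨-, φ, hφ⟩
    rw [← dist_eq_norm, dist_comm] at hφ
    exact (hN φ).not_gt hφ

/-- If `θ : ℝ^d → ℝ^n` is continuous and satisfies the Anosov condition, and
`P : ℝ^d × 𝕋ⁿ → ℝ^d` is continuous, then for fixed `δ, R > 0` the Lebesgue measure of the
set `A^δ_{N,R}` of those `I` with `‖I‖ < R` for which the time average of
`t ↦ P(I, φ + tθ(I))` over `[0,N]` differs from the space average `⟨P⟩(I)` by more than `δ`
for some angle `φ`, tends to `0` as `N → ∞`. -/
theorem measure_nonergodic_set_tendsto_zero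
    (d n : ℕ) (θ : EuclideanSpace ℝ (Fin d) → Fin n → ℝ) (hθ : Continuous θ)
    (hAnosov : volume (⋃ k ∈ {k : Fin n → ℤ | k ≠ 0},
        {I : EuclideanSpace ℝ (Fin d) | ∑ i, (k i : ℝ) * θ I i = 0}) = 0)
    (P : EuclideanSpace ℝ (Fin d) → Torus n → EuclideanSpace ℝ (Fin d))
    (hP : Continuous fun p : EuclideanSpace ℝ (Fin d) × Torus n => P p.1 p.2)
    (δ R : ℝ) (hδ : 0 < δ) (hR : 0 < R) :
    Tendsto
      (fun N : ℝ => volume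
        {I : EuclideanSpace ℝ (Fin d) | ‖I‖ < R ∧ ∃ φ : Torus n,
          δ < ‖(1 / N) • (∫ t in (0:ℝ)..N,
                  P I (fun i => φ i + ((t * θ I i : ℝ) : AddCircle (2 * π))))
                - ∫ ψ, P I ψ ∂(haarT n)‖})
      atTop (nhds 0) :=
  measure_nonergodic_set_tendsto_zero_general d n θ hθ hAnosov P hP δ R hδ
end
end

section
/- Let λ > 0 and let B : ℝ^{2n} → ℝ^{2n×2n₁} be continuous with λ‖ξ‖² ≤ ξᵀB(v)B(v)ᵀξ ≤ λ⁻¹‖ξ‖² for all v, ξ. Write B = (B_{kj}) in 2×2 blocks (1 ≤ k ≤ n, 1 ≤ j ≤ n₁), let X(v) = ∫_{𝕋^n} Φ_{−θ} B(Φ_θ v) B(Φ_θ v)ᵀ Φ_θ dθ, and let ⟨⟨B⟩⟩(v) = (⟨⟨B⟩⟩_{kj}(v))_{1≤k,j≤n} (2×2 blocks) be its unique symmetric positive-semidefinite square root. Then for all 1 ≤ k, m ≤ n and all v ∈ ℝ^{2n}: Σ_{j=1}^n v_kᵀ ⟨⟨B⟩⟩_{kj}(v) (⟨⟨B⟩⟩_{mj}(v))ᵀ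 v_m = ∫_{𝕋^n} Σ_{j=1}^{n₁} (Φᵏ_θ v_k)ᵀ B_{kj}(Φ_θ v) (B_{mj}(Φ_θ v))ᵀ (Φᵐ_θ v_m) dθ; moreover this quantity is invariant under v ↦ Φ_σ v for every σ ∈ 𝕋^n, hence depends on v only through the action vector I(v). -/
open MeasureTheory Real Matrix

noncomputable section

/-- Cosine, as a function on `ℝ/(2πℤ)`. -/
noncomputable def tcos : AddCircle (2 * π) → ℝ := Real.cos_periodic.lift

/-- Sine, as a function on `ℝ/(2πℤ)`. -/
noncomputable def tsin : AddCircle (2 * π) → ℝ := Real.sin_periodic.lift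

/-- `ℝ^{2n} = (ℝ²)ⁿ`, with Euclidean norm; the `k`-th ℝ²-component of `v` is
`(v (k,0), v (k,1))`. -/
abbrev E2n (n : ℕ) := EuclideanSpace ℝ (Fin n × Fin 2)

/-- The block-diagonal rotation `Φ_θ` acting on `ℝ^{2n}`: the `k`-th ℝ²-block is rotated
by the angle `θ k`. -/
noncomputable def rotVec {n : ℕ} (θ : Torus n) (v : E2n n) : E2n n :=
  (EuclideanSpace.equiv (Fin n × Fin 2) ℝ).symm fun p =>
    if p.2 = 0 then tcos (θ p.1) * v (p.1, 0) - tsin (θ p.1) * v (p.1, 1)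
    else tsin (θ p.1) * v (p.1, 0) + tcos (θ p.1) * v (p.1, 1)

/-- The block-diagonal rotation `Φ_θ` as a `2n × 2n` matrix. -/
noncomputable def rotMat {n : ℕ} (θ : Torus n) : Matrix (Fin n × Fin 2) (Fin n × Fin 2) ℝ :=
  Matrix.of fun p q =>
    if p.1 = q.1 then
      if p.2 = 0 then (if q.2 = 0 then tcos (θ p.1) else -tsin (θ p.1))
      else (if q.2 = 0 then tsin (θ p.1) else tcos (θ p.1))
    else 0

/-- The averaged drift `R(v) = ∫_{𝕋ⁿ} Φ_{−θ} P(Φ_θ v) dθ`. -/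
noncomputable def Rvec {n : ℕ} (P : E2n n → E2n n) (v : E2n n) : E2n n :=
  ∫ θ : Torus n, rotVec (-θ) (P (rotVec θ v)) ∂(haarT n)

/-- The averaged diffusion matrix
`X(v) = ∫_{𝕋ⁿ} Φ_{−θ} B(Φ_θ v) B(Φ_θ v)ᵀ Φ_θ dθ` (defined entrywise). -/
noncomputable def Xmat {n n₁ : ℕ}
    (B : E2n n → Matrix (Fin n × Fin 2) (Fin n₁ × Fin 2) ℝ) (v : E2n n) :
    Matrix (Fin n × Fin 2) (Fin n × Fin 2) ℝ :=
  Matrix.of fun p q =>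
    ∫ θ : Torus n,
      (rotMat (-θ) * (B (rotVec θ v) * (B (rotVec θ v))ᵀ) * rotMat θ) p q ∂(haarT n)

/-- The quadratic pairing `Σ_{j=1}^n v_kᵀ S_{kj} (S_{mj})ᵀ v_m`, where `S_{kj}` denotes the
`2×2` block of `S` at position `(k,j)`, written out in coordinates. -/
noncomputable def quadBlock {n : ℕ} (S : Matrix (Fin n × Fin 2) (Fin n × Fin 2) ℝ)
    (v : E2n n) (k m : Fin n) : ℝ :=
  ∑ j : Fin n, ∑ a : Fin 2, ∑ b : Fin 2, ∑ c : Fin 2,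
    v (k, a) * S (k, a) (j, b) * S (m, c) (j, b) * v (m, c)

/-!
With `blockProj k v` the `k`-th block of `v` padded by zeros, the pairing for a matrix `S` is
the quadratic form `blockProj k v ⬝ᵥ (S * Sᵀ) *ᵥ blockProj m v`, and `S * Sᵀ = S * S = X(v)`
for the symmetric square root. Since `Φ_θ` is orthogonal and block diagonal, conjugating by it
inside `X(v)` turns the blocks of `v` into those of `Φ_θ v`, which gives the integral formula.
That integral is a torus average of a function of `Φ_θ v`, hence invariant under
`v ↦ Φ_σ v` by translation invariance of Haar measure; and two vectors with the same actions
differ by such a rotation.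
-/

@[fun_prop]
lemma continuous_tcos : Continuous tcos := continuous_coinduced_dom.mpr Real.continuous_cos

@[fun_prop]
lemma continuous_tsin : Continuous tsin := continuous_coinduced_dom.mpr Real.continuous_sin

lemma tcos_neg (x : AddCircle (2 * π)) : tcos (-x) = tcos x := by
  induction x using QuotientAddGroup.induction_on with
  | H r => exact Real.cos_neg r

lemma tsin_neg (x : AddCircle (2 * π)) : tsin (-x) = -tsin x := by
  induction x using QuotientAddGroup.induction_on with
  | H r => exact Real.sin_neg r

lemma tcos_add (x y : AddCircle (2 * π)) : tcos (x + y) = tcos x * tcos y - tsin x * tsin y := by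
  induction x using QuotientAddGroup.induction_on with
  | H r =>
    induction y using QuotientAddGroup.induction_on with
    | H s => exact Real.cos_add r s

lemma tsin_add (x y : AddCircle (2 * π)) : tsin (x + y) = tsin x * tcos y + tcos x * tsin y := by
  induction x using QuotientAddGroup.induction_on with
  | H r =>
    induction y using QuotientAddGroup.induction_on with
    | H s => exact Real.sin_add r s

instance (n : ℕ) : (haarT n).IsAddRightInvariant := by
  unfold haarT; infer_instance

lemma Continuous.integrable_haarT {n : ℕ} {f : Torus n → ℝ} (hf : Continuous f) :
    Integrable f (haarT n) := by
  refine (hf.integrable_of_hasCompactSupport (.of_compactSpace f)).smul_measure ?_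
  rw [Ne, ENNReal.inv_eq_top, ENNReal.ofReal_eq_zero, not_le]
  positivity

section BlockProj

variable {ι α : Type*} [DecidableEq ι]

def blockProj (k : ι) (w : ι × α → ℝ) : ι × α → ℝ :=
  fun p => if p.1 = k then w p else 0

variable [Fintype ι] [Fintype α]

lemma transpose_mulVec_blockProj {κ : Type*} (M : Matrix (ι × α) κ ℝ) (k : ι)
    (w : ι × α → ℝ) (q : κ) :
    (Mᵀ *ᵥ blockProj k w) q = ∑ a, w (k, a) * M (k, a) q := by
  simp [blockProj, mulVec, dotProduct, Fintype.sum_prod_type_right, mul_comm]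

lemma sum_blocks_eq_dotProduct_mul_transpose_mulVec {κ β : Type*} [Fintype κ] [Fintype β]
    (M : Matrix (ι × α) (κ × β) ℝ) (w : ι × α → ℝ) (k m : ι) :
    ∑ j : κ, ∑ a : α, ∑ b : β, ∑ c : α, w (k, a) * M (k, a) (j, b) * M (m, c) (j, b) * w (m, c)
      = blockProj k w ⬝ᵥ (M * Mᵀ) *ᵥ blockProj m w := by
  rw [← mulVec_mulVec, dotProduct_mulVec, ← mulVec_transpose]
  simp only [dotProduct, Fintype.sum_prod_type, transpose_mulVec_blockProj, Finset.sum_mul_sum]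
  refine Finset.sum_congr rfl fun j _ => ?_
  rw [Finset.sum_comm]
  exact Finset.sum_congr rfl fun a _ => Finset.sum_congr rfl fun b _ =>
    Finset.sum_congr rfl fun c _ => by ring

end BlockProj

section Rotation

variable {n : ℕ}

@[fun_prop]
lemma continuous_rotVec (v : E2n n) : Continuous fun θ : Torus n => rotVec θ v :=
  (EuclideanSpace.equiv _ ℝ).symm.continuous.comp <| continuous_pi fun p => by
    split_ifs <;> fun_prop

@[fun_prop]
lemma continuous_rotMat : Continuous (rotMat : Torus n → Matrix _ _ ℝ) :=
  continuous_matrix fun p q => by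
    simp only [rotMat, Matrix.of_apply]
    split_ifs <;> fun_prop

lemma rotVec_rotVec (θ σ : Torus n) (v : E2n n) :
    rotVec θ (rotVec σ v) = rotVec (θ + σ) v := by
  ext ⟨k, a⟩
  fin_cases a <;> simp [rotVec, tcos_add, tsin_add] <;> ring

lemma rotMat_neg (θ : Torus n) : rotMat (-θ) = (rotMat θ)ᵀ := by
  ext ⟨k, a⟩ ⟨j, b⟩
  by_cases h : k = j
  · subst h
    fin_cases a <;> fin_cases b <;> simp [rotMat, tcos_neg, tsin_neg]
  · simp [rotMat, h, Ne.symm h]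

lemma rotMat_mulVec_blockProj (θ : Torus n) (v : E2n n) (k : Fin n) :
    rotMat θ *ᵥ blockProj k v = blockProj k (rotVec θ v) := by
  ext ⟨j, a⟩
  simp only [mulVec, dotProduct, Fintype.sum_prod_type]
  rw [Finset.sum_eq_single j (fun i _ hi => by simp [rotMat, Ne.symm hi]) (by simp)]
  by_cases hj : j = k
  · subst hj
    fin_cases a <;> simp [rotMat, blockProj, rotVec, Fin.sum_univ_two, sub_eq_add_neg]
  · simp [blockProj, hj]

lemma blockProj_dotProduct_conj_rotMat (θ : Torus n)
    (M : Matrix (Fin n × Fin 2) (Fin n × Fin 2) ℝ) (v : E2n n) (k m : Fin n) :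
    blockProj k v ⬝ᵥ (rotMat (-θ) * M * rotMat θ) *ᵥ blockProj m v
      = blockProj k (rotVec θ v) ⬝ᵥ M *ᵥ blockProj m (rotVec θ v) := by
  rw [rotMat_neg, ← mulVec_mulVec, ← mulVec_mulVec, dotProduct_mulVec, vecMul_transpose,
    rotMat_mulVec_blockProj, rotMat_mulVec_blockProj]

end Rotation

lemma dotProduct_mulVec_integral {ι κ α : Type*} [Fintype ι] [Fintype κ] [MeasurableSpace α]
    {μ : Measure α} {N : α → Matrix ι κ ℝ} (hN : ∀ p q, Integrable (fun θ => N θ p q) μ)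
    (x : ι → ℝ) (y : κ → ℝ) :
    x ⬝ᵥ (Matrix.of fun p q => ∫ θ, N θ p q ∂μ) *ᵥ y = ∫ θ, x ⬝ᵥ N θ *ᵥ y ∂μ := by
  simp only [dotProduct, mulVec, of_apply]
  rw [integral_finsetSum _ fun p _ =>
    (integrable_finsetSum _ fun q _ => (hN p q).mul_const _).const_mul _]
  refine Finset.sum_congr rfl fun p _ => ?_
  rw [integral_const_mul, integral_finsetSum _ fun q _ => (hN p q).mul_const _]
  simp only [integral_mul_const]

section Averaging

variable {n n₁ : ℕ} {B : E2n n → Matrix (Fin n × Fin 2) (Fin n₁ × Fin 2) ℝ}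

lemma blockProj_dotProduct_Xmat_mulVec (hB : Continuous B) (v : E2n n) (k m : Fin n) :
    blockProj k v ⬝ᵥ Xmat B v *ᵥ blockProj m v
      = ∫ θ, blockProj k (rotVec θ v) ⬝ᵥ
          (B (rotVec θ v) * (B (rotVec θ v))ᵀ) *ᵥ blockProj m (rotVec θ v) ∂haarT n := by
  have hint : ∀ p q, Integrable (fun θ : Torus n =>
      (rotMat (-θ) * (B (rotVec θ v) * (B (rotVec θ v))ᵀ) * rotMat θ) p q) (haarT n) :=
    fun p q => (Continuous.matrix_elem (by fun_prop) p q).integrable_haarT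
  rw [Xmat, dotProduct_mulVec_integral hint]
  simp only [blockProj_dotProduct_conj_rotMat]

lemma quadBlock_eq_integral (hB : Continuous B) {S : Matrix (Fin n × Fin 2) (Fin n × Fin 2) ℝ}
    {v : E2n n} (hS : S * Sᵀ = Xmat B v) (k m : Fin n) :
    quadBlock S v k m
      = ∫ θ : Torus n,
          (∑ j : Fin n₁, ∑ a : Fin 2, ∑ b : Fin 2, ∑ c : Fin 2,
            (rotVec θ v) (k, a) * B (rotVec θ v) (k, a) (j, b)
              * B (rotVec θ v) (m, c) (j, b) * (rotVec θ v) (m, c)) ∂(haarT n) := by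
  simp only [quadBlock, sum_blocks_eq_dotProduct_mul_transpose_mulVec, hS, blockProj_dotProduct_Xmat_mulVec hB]

end Averaging

lemma integral_comp_rotVec_rotVec {n : ℕ} (F : E2n n → ℝ) (σ : Torus n) (v : E2n n) :
    ∫ θ, F (rotVec θ (rotVec σ v)) ∂haarT n = ∫ θ, F (rotVec θ v) ∂haarT n := by
  simp only [rotVec_rotVec]
  exact integral_add_right_eq_self (fun θ => F (rotVec θ v)) σ

lemma exists_rotation_eq_of_sq_add_sq_eq {v₀ v₁ w₀ w₁ : ℝ} (h : v₀ ^ 2 + v₁ ^ 2 = w₀ ^ 2 + w₁ ^ 2) :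
    ∃ θ : ℝ, cos θ * v₀ - sin θ * v₁ = w₀ ∧ sin θ * v₀ + cos θ * v₁ = w₁ := by
  set z : ℂ := ⟨v₀, v₁⟩
  set w : ℂ := ⟨w₀, w₁⟩
  have hzw : ‖z‖ = ‖w‖ := by
    rw [Complex.norm_def, Complex.norm_def, Complex.normSq_mk, Complex.normSq_mk]
    congr 1; linarith
  obtain ⟨θ, hθ⟩ : ∃ θ : ℝ, Complex.exp (θ * Complex.I) * z = w := by
    refine ⟨w.arg - z.arg, ?_⟩
    calc Complex.exp (↑(w.arg - z.arg) * Complex.I) * z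
        = Complex.exp (↑(w.arg - z.arg) * Complex.I) * (‖z‖ * Complex.exp (z.arg * Complex.I)) := by
          rw [Complex.norm_mul_exp_arg_mul_I]
      _ = ‖w‖ * Complex.exp (w.arg * Complex.I) := by
          rw [hzw, mul_left_comm, ← Complex.exp_add]; push_cast; ring_nf
      _ = w := Complex.norm_mul_exp_arg_mul_I w
  rw [Complex.exp_mul_I] at hθ
  refine ⟨θ, ?_, ?_⟩
  · simpa [z, w, Complex.cos_ofReal_re, Complex.sin_ofReal_re] using congrArg Complex.re hθ
  · simpa [z, w, Complex.cos_ofReal_re, Complex.sin_ofReal_re, add_comm] using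
      congrArg Complex.im hθ

lemma exists_rotVec_eq {n : ℕ} {v w : E2n n}
    (h : ∀ j, v (j, 0) ^ 2 + v (j, 1) ^ 2 = w (j, 0) ^ 2 + w (j, 1) ^ 2) :
    ∃ σ : Torus n, rotVec σ v = w := by
  choose θ hθ using fun j => exists_rotation_eq_of_sq_add_sq_eq (h j)
  refine ⟨fun j => (θ j : AddCircle (2 * π)), ?_⟩
  ext ⟨j, a⟩
  fin_cases a
  exacts [(hθ j).1, (hθ j).2]

theorem dispersion_pairing_depends_only_on_actions_general
    (n n₁ : ℕ)
    (B : E2n n → Matrix (Fin n × Fin 2) (Fin n₁ × Fin 2) ℝ)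
    (hBc : ∀ p q, Continuous fun v => B v p q)
    (sq : E2n n → Matrix (Fin n × Fin 2) (Fin n × Fin 2) ℝ)
    (hsq : ∀ w, (sq w).PosSemidef ∧ sq w * sq w = Xmat B w)
    (k m : Fin n) (v : E2n n) :
    (quadBlock (sq v) v k m
      = ∫ θ : Torus n,
          (∑ j : Fin n₁, ∑ a : Fin 2, ∑ b : Fin 2, ∑ c : Fin 2,
            (rotVec θ v) (k, a) * B (rotVec θ v) (k, a) (j, b)
              * B (rotVec θ v) (m, c) (j, b) * (rotVec θ v) (m, c)) ∂(haarT n)) ∧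
    (∀ σ : Torus n, quadBlock (sq (rotVec σ v)) (rotVec σ v) k m = quadBlock (sq v) v k m) ∧
    (∀ w : E2n n,
      (∀ j : Fin n, (v (j, 0)) ^ 2 + (v (j, 1)) ^ 2 = (w (j, 0)) ^ 2 + (w (j, 1)) ^ 2) →
      quadBlock (sq w) w k m = quadBlock (sq v) v k m) := by
  have hB : Continuous B := continuous_matrix hBc
  have hgram : ∀ w, sq w * (sq w)ᵀ = Xmat B w := fun w => by
    rw [← conjTranspose_eq_transpose_of_trivial, (hsq w).1.1.eq, (hsq w).2]
  have hinv : ∀ σ : Torus n,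
      quadBlock (sq (rotVec σ v)) (rotVec σ v) k m = quadBlock (sq v) v k m := fun σ => by
    rw [quadBlock_eq_integral hB (hgram _), quadBlock_eq_integral hB (hgram _)]
    exact integral_comp_rotVec_rotVec (fun u => ∑ j : Fin n₁, ∑ a : Fin 2, ∑ b : Fin 2,
      ∑ c : Fin 2, u (k, a) * B u (k, a) (j, b) * B u (m, c) (j, b) * u (m, c)) σ v
  refine ⟨quadBlock_eq_integral hB (hgram v) k m, hinv, fun w hw => ?_⟩
  obtain ⟨σ, rfl⟩ := exists_rotVec_eq hw
  exact hinv σ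

/-- For continuous uniformly elliptic `B` with averaged diffusion matrix `X` and principal
square root `⟨⟨B⟩⟩ = sq`, the quantity `Σ_j v_kᵀ ⟨⟨B⟩⟩_{kj} (⟨⟨B⟩⟩_{mj})ᵀ v_m` equals
`∫_{𝕋ⁿ} Σ_j (Φᵏ_θ v_k)ᵀ B_{kj}(Φ_θ v)(B_{mj}(Φ_θ v))ᵀ (Φᵐ_θ v_m) dθ`; moreover it is
invariant under the torus action and hence depends only on the action vector `I(v)`. -/
theorem dispersion_pairing_depends_only_on_actions
    (n n₁ : ℕ) (lam : ℝ) (hlam : 0 < lam)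
    (B : E2n n → Matrix (Fin n × Fin 2) (Fin n₁ × Fin 2) ℝ)
    (hBc : ∀ p q, Continuous fun v => B v p q)
    (hell : ∀ (v : E2n n) (ξ : Fin n × Fin 2 → ℝ),
      lam * (ξ ⬝ᵥ ξ) ≤ ξ ⬝ᵥ (B v * (B v)ᵀ).mulVec ξ ∧
      ξ ⬝ᵥ (B v * (B v)ᵀ).mulVec ξ ≤ lam⁻¹ * (ξ ⬝ᵥ ξ))
    (sq : E2n n → Matrix (Fin n × Fin 2) (Fin n × Fin 2) ℝ)
    (hsq : ∀ w, (sq w).PosSemidef ∧ sq w * sq w = Xmat B w)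
    (k m : Fin n) (v : E2n n) :
    (quadBlock (sq v) v k m
      = ∫ θ : Torus n,
          (∑ j : Fin n₁, ∑ a : Fin 2, ∑ b : Fin 2, ∑ c : Fin 2,
            (rotVec θ v) (k, a) * B (rotVec θ v) (k, a) (j, b)
              * B (rotVec θ v) (m, c) (j, b) * (rotVec θ v) (m, c)) ∂(haarT n)) ∧
    (∀ σ : Torus n, quadBlock (sq (rotVec σ v)) (rotVec σ v) k m = quadBlock (sq v) v k m) ∧
    (∀ w : E2n n,
      (∀ j : Fin n, (v (j, 0)) ^ 2 + (v (j, 1)) ^ 2 = (w (j, 0)) ^ 2 + (w (j, 1)) ^ 2) →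
      quadBlock (sq w) w k m = quadBlock (sq v) v k m) :=
  dispersion_pairing_depends_only_on_actions_general n n₁ B hBc sq hsq k m v
end
end

section
/- Let n ≥ 1 and R > 0. Define Γ : ℝ^n → ℝ by Γ(x) = exp(−1/(‖x‖ − R)) for ‖x‖ > R and Γ(x) = 0 for ‖x‖ ≤ R (Euclidean norm); Γ is smooth, and let ∇Γ denote its gradient. Let W̃ : ℝ^n → ℝ^n be Lebesgue-measurable and for α ∈ ℝ set W_α = α∇Γ + W̃. Then: (a) the set of α ∈ ℝ for which there exists m ∈ ℤ^n \ {0} such that the Lebesgue measure of {x ∈ ℝ^n : ‖x‖ > R and m·W_α(x) = 0} is positive is at most countable; (b) consequently, if in addition the Lebesgue measure of ⋃_{m ∈ ℤ^n\{0}} {x : ‖x‖ ≤ R, m·W̃(x) = 0} equals zero, then for all but at most countably many α ∈ ℝ the map W_α satisfies the Anosov condition, i.e. the Lebesgue measure of ⋃_{m ∈ ℤ^n\{0}} {x ∈ ℝ^n : m·W_α(x) = 0} equals zero. -/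
/-! Outside the ball `‖x‖ ≤ R`, `∇Γ(x)` is a positive multiple of `x`, so for fixed `m ≠ 0` the
function `m·∇Γ` vanishes there only on the hyperplane `m·x = 0`, a null set. Off that set,
`m·W_α(x) = α (m·∇Γ(x)) + m·W̃(x)` vanishes for exactly one `α`, namely `-m·W̃(x) / m·∇Γ(x)`, so
the sets `{m·W_α = 0}` are, up to a common null set, the level sets of one measurable function,
and only countably many of them have positive measure. On the closed ball `∇Γ = 0` because `Γ`
attains its minimum `0` there; hence `W_α = W̃` there, which gives (b). -/

open MeasureTheory Real

noncomputable section

/-- The smooth cut-off function `Γ(x) = exp(−1/(‖x‖−R))` for `‖x‖ > R`, `Γ(x) = 0` for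
`‖x‖ ≤ R`. -/
noncomputable def Gam (n : ℕ) (R : ℝ) (x : EuclideanSpace ℝ (Fin n)) : ℝ :=
  if ‖x‖ ≤ R then 0 else Real.exp (-(‖x‖ - R)⁻¹)

section InnerProductSpace

open InnerProductSpace

variable {F : Type*} [NormedAddCommGroup F] [InnerProductSpace ℝ F]

theorem hasFDerivAt_norm_of_ne_zero {x : F} (hx : x ≠ 0) :
    HasFDerivAt (fun y : F => ‖y‖) (‖x‖⁻¹ • innerSL ℝ x) x := by
  have h := (hasStrictFDerivAt_norm_sq x).hasFDerivAt.sqrt (by positivity)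
  simp only [sqrt_sq (norm_nonneg _)] at h
  convert h using 1
  ext y
  simp only [smul_apply, coe_innerSL_apply, smul_eq_mul, one_div, mul_inv_rev,
    nsmul_eq_mul, Nat.cast_ofNat]
  field_simp

variable [CompleteSpace F]

theorem HasDerivAt.hasGradientAt_comp_norm {g : ℝ → ℝ} {g' : ℝ} {x : F}
    (hg : HasDerivAt g g' ‖x‖) (hx : x ≠ 0) :
    HasGradientAt (fun y => g ‖y‖) ((g' / ‖x‖) • x) x := by
  have hdual : toDual ℝ F ((g' / ‖x‖) • x) = g' • ‖x‖⁻¹ • innerSL ℝ x := by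
    ext y
    simp [div_eq_mul_inv, mul_assoc]
  rw [hasGradientAt_iff_hasFDerivAt, hdual]
  exact hg.comp_hasFDerivAt x (hasFDerivAt_norm_of_ne_zero hx)

theorem measurable_gradient [MeasurableSpace F] [BorelSpace F] (f : F → ℝ) :
    Measurable (gradient f) :=
  (toDual ℝ F).symm.continuous.measurable.comp (measurable_fderiv ℝ f)

end InnerProductSpace

theorem expNegInvGlue.hasDerivAt (t : ℝ) :
    HasDerivAt expNegInvGlue (t⁻¹ ^ 2 * expNegInvGlue t) t := by
  simpa using expNegInvGlue.hasDerivAt_polynomial_eval_inv_mul 1 t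

theorem Gam_eq_expNegInvGlue (n : ℕ) (R : ℝ) : Gam n R = fun x => expNegInvGlue (‖x‖ - R) := by
  ext x
  simp [Gam, expNegInvGlue]

theorem gradient_Gam_of_ne_zero {n : ℕ} (R : ℝ) {x : EuclideanSpace ℝ (Fin n)} (hx : x ≠ 0) :
    gradient (Gam n R) x = ((‖x‖ - R)⁻¹ ^ 2 * expNegInvGlue (‖x‖ - R) / ‖x‖) • x := by
  rw [Gam_eq_expNegInvGlue]
  exact (((expNegInvGlue.hasDerivAt _).comp_sub_const _ R).hasGradientAt_comp_norm hx).gradient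

theorem gradient_Gam_of_norm_le {n : ℕ} {R : ℝ} {x : EuclideanSpace ℝ (Fin n)} (hx : ‖x‖ ≤ R) :
    gradient (Gam n R) x = 0 := by
  have hmin : IsLocalMin (Gam n R) x := Filter.Eventually.of_forall fun y => by
    simp only [Gam_eq_expNegInvGlue, expNegInvGlue.zero_of_nonpos (sub_nonpos.2 hx),
      expNegInvGlue.nonneg]
  simp [gradient, hmin.fderiv_eq_zero]

theorem volume_setOf_sum_mul_eq_zero {ι : Type*} [Fintype ι] {a : ι → ℝ} (ha : a ≠ 0) :
    volume {x : EuclideanSpace ℝ ι | ∑ i, a i * x i = 0} = 0 := by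
  let L : EuclideanSpace ℝ ι →ₗ[ℝ] ℝ := innerₛₗ ℝ (WithLp.toLp 2 a)
  have hL : ∀ x, L x = ∑ i, a i * x i := fun x => by
    simp [L, PiLp.inner_apply, mul_comm]
  obtain ⟨j, hj⟩ := Function.ne_iff.1 ha
  classical
  have hker : LinearMap.ker L ≠ ⊤ := fun h => hj <| by
    have := LinearMap.mem_ker.1 (h ▸ Submodule.mem_top (x := EuclideanSpace.single j (1 : ℝ)))
    simpa [hL] using this
  have hset : {x : EuclideanSpace ℝ ι | ∑ i, a i * x i = 0} = LinearMap.ker L := by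
    ext x
    simp [hL]
  rw [hset]
  exact Measure.addHaar_submodule volume _ hker

theorem Measurable.sum_mul_apply {X ι : Type*} [MeasurableSpace X] [Fintype ι]
    {f : X → EuclideanSpace ℝ ι} (hf : Measurable f) (a : ι → ℝ) :
    Measurable fun x => ∑ i, a i * f x i := by
  fun_prop

theorem sum_mul_smul_add_apply {ι : Type*} [Fintype ι] (a : ι → ℝ) (α : ℝ)
    (v w : EuclideanSpace ℝ ι) :
    ∑ i, a i * (α • v + w) i = α * ∑ i, a i * v i + ∑ i, a i * w i := by
  simp only [PiLp.add_apply, PiLp.smul_apply, smul_eq_mul, mul_add, Finset.sum_add_distrib,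
    Finset.mul_sum, mul_left_comm α]

theorem countable_setOf_measure_pos_mul_add_eq_zero {X : Type*} [MeasurableSpace X]
    {μ : Measure X} [SFinite μ] {s : Set X} {f g : X → ℝ} (hf : Measurable f)
    (hg : Measurable g) (hg0 : μ {x | x ∈ s ∧ g x = 0} = 0) :
    {α : ℝ | 0 < μ {x | x ∈ s ∧ α * g x + f x = 0}}.Countable := by
  -- off `{g = 0}`, `α * g x + f x = 0` forces `α = -f x / g x`
  let ν := μ.restrict {x | x ∈ s ∧ g x ≠ 0}
  refine (Measure.countable_meas_level_set_pos (μ := ν) (hf.neg.div hg)).mono fun α hα => ?_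
  have hsub : {x | x ∈ s ∧ α * g x + f x = 0} ⊆
      {x | x ∈ s ∧ g x = 0} ∪ {x | -f x / g x = α} ∩ {x | x ∈ s ∧ g x ≠ 0} := by
    rintro x ⟨hxs, hx⟩
    by_cases hgx : g x = 0
    · exact Or.inl ⟨hxs, hgx⟩
    · refine Or.inr ⟨?_, hxs, hgx⟩
      show -f x / g x = α
      rw [div_eq_iff hgx]
      linarith
  calc 0 < μ {x | x ∈ s ∧ α * g x + f x = 0} := hα
    _ ≤ μ {x | x ∈ s ∧ g x = 0} + μ ({x | -f x / g x = α} ∩ {x | x ∈ s ∧ g x ≠ 0}) :=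
      (measure_mono hsub).trans (measure_union_le _ _)
    _ ≤ ν {x | -f x / g x = α} := by
      rw [hg0, zero_add]
      exact Measure.le_restrict_apply _ _

theorem volume_setOf_sum_mul_gradient_Gam_eq_zero {n : ℕ} (R : ℝ) {a : Fin n → ℝ} (ha : a ≠ 0) :
    volume {x | R < ‖x‖ ∧ ∑ i, a i * gradient (Gam n R) x i = 0} = 0 := by
  refine measure_mono_null (fun x ⟨hxR, hx⟩ => ?_) (volume_setOf_sum_mul_eq_zero ha)
  by_cases hx0 : x = 0
  · simp [hx0]
  have hc : 0 < (‖x‖ - R)⁻¹ ^ 2 * expNegInvGlue (‖x‖ - R) / ‖x‖ := by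
    have := expNegInvGlue.pos_of_pos (sub_pos.2 hxR)
    have := sub_pos.2 hxR
    positivity
  rw [gradient_Gam_of_ne_zero R hx0] at hx
  simp only [PiLp.smul_apply, smul_eq_mul, mul_left_comm (a _), ← Finset.mul_sum] at hx
  exact (mul_eq_zero.1 hx).resolve_left hc.ne'

theorem countable_setOf_volume_pos_sum_mul_smul_gradient_Gam_add_eq_zero {n : ℕ} (R : ℝ)
    {W : EuclideanSpace ℝ (Fin n) → EuclideanSpace ℝ (Fin n)} (hW : Measurable W)
    {m : Fin n → ℤ} (hm : m ≠ 0) :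
    {α : ℝ | 0 < volume {x : EuclideanSpace ℝ (Fin n) |
      R < ‖x‖ ∧ ∑ i, (m i : ℝ) * (α • gradient (Gam n R) x + W x) i = 0}}.Countable := by
  have hm' : (fun i => (m i : ℝ)) ≠ 0 := by
    obtain ⟨j, hj⟩ := Function.ne_iff.1 hm
    exact Function.ne_iff.2 ⟨j, by simpa using hj⟩
  simp_rw [sum_mul_smul_add_apply]
  exact countable_setOf_measure_pos_mul_add_eq_zero (hW.sum_mul_apply _)
    ((measurable_gradient _).sum_mul_apply _) (volume_setOf_sum_mul_gradient_Gam_eq_zero R hm')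

theorem extension_anosov_for_cocountably_many_alpha_general
    (n : ℕ) (R : ℝ)
    (W : EuclideanSpace ℝ (Fin n) → EuclideanSpace ℝ (Fin n))
    (hW : Measurable W) :
    ({α : ℝ | ∃ m : Fin n → ℤ, m ≠ 0 ∧
        0 < volume {x : EuclideanSpace ℝ (Fin n) |
          R < ‖x‖ ∧ ∑ i, (m i : ℝ) * (α • gradient (Gam n R) x + W x) i = 0}}).Countable ∧
    ((volume (⋃ m ∈ {m : Fin n → ℤ | m ≠ 0},
        {x : EuclideanSpace ℝ (Fin n) | ‖x‖ ≤ R ∧ ∑ i, (m i : ℝ) * W x i = 0}) = 0) →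
      ∃ C : Set ℝ, C.Countable ∧ ∀ α ∉ C,
        volume (⋃ m ∈ {m : Fin n → ℤ | m ≠ 0},
          {x : EuclideanSpace ℝ (Fin n) |
            ∑ i, (m i : ℝ) * (α • gradient (Gam n R) x + W x) i = 0}) = 0) := by
  refine ⟨?bad, fun hball => ⟨_, ?bad, fun α hα => ?_⟩⟩
  case bad =>
    refine (Set.countable_iUnion fun m : {m : Fin n → ℤ // m ≠ 0} =>
      countable_setOf_volume_pos_sum_mul_smul_gradient_Gam_add_eq_zero R hW m.2).mono ?_
    rintro α ⟨m, hm, hpos⟩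
    exact Set.mem_iUnion.2 ⟨⟨m, hm⟩, hpos⟩
  refine (measure_biUnion_null_iff (Set.to_countable _)).2 fun m hm => ?_
  have hout : volume {x : EuclideanSpace ℝ (Fin n) |
      R < ‖x‖ ∧ ∑ i, (m i : ℝ) * (α • gradient (Gam n R) x + W x) i = 0} = 0 :=
    nonpos_iff_eq_zero.1 <| not_lt.1 fun hpos => hα ⟨m, hm, hpos⟩
  refine measure_mono_null (fun x hx => ?_)
    (measure_union_null (measure_mono_null (Set.subset_biUnion_of_mem hm) hball) hout)
  rcases le_or_gt ‖x‖ R with hxR | hxR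
  · exact Or.inl ⟨hxR, by simpa [gradient_Gam_of_norm_le hxR] using hx⟩
  · exact Or.inr ⟨hxR, hx⟩

/-- (a) The set of `α ∈ ℝ` for which some nonzero integer vector `m` is orthogonal to
`W_α = α∇Γ + W̃` on a subset of `{‖x‖ > R}` of positive Lebesgue measure is at most
countable. (b) Consequently, if the rational-dependence locus of `W̃` inside `{‖x‖ ≤ R}`
has measure zero, then for all but countably many `α` the extension `W_α` satisfies the
Anosov condition on all of `ℝⁿ`. -/
theorem extension_anosov_for_cocountably_many_alpha
    (n : ℕ) (hn : 1 ≤ n) (R : ℝ) (hR : 0 < R)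
    (W : EuclideanSpace ℝ (Fin n) → EuclideanSpace ℝ (Fin n))
    (hW : Measurable W) :
    ({α : ℝ | ∃ m : Fin n → ℤ, m ≠ 0 ∧
        0 < volume {x : EuclideanSpace ℝ (Fin n) |
          R < ‖x‖ ∧ ∑ i, (m i : ℝ) * (α • gradient (Gam n R) x + W x) i = 0}}).Countable ∧
    ((volume (⋃ m ∈ {m : Fin n → ℤ | m ≠ 0},
        {x : EuclideanSpace ℝ (Fin n) | ‖x‖ ≤ R ∧ ∑ i, (m i : ℝ) * W x i = 0}) = 0) →
      ∃ C : Set ℝ, C.Countable ∧ ∀ α ∉ C,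
        volume (⋃ m ∈ {m : Fin n → ℤ | m ≠ 0},
          {x : EuclideanSpace ℝ (Fin n) |
            ∑ i, (m i : ℝ) * (α • gradient (Gam n R) x + W x) i = 0}) = 0) :=
  extension_anosov_for_cocountably_many_alpha_general n R W hW
end
end
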